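/- arXiv:1202.1976 — 2 statements merged into one kernel-verified Lean document; each statement's English description precedes it below -/
import Mathlib

section
/- For every nonnegative integer n, real ν ≥ 0, real u, and α > 0: ∫_{-∞}^{∞} L_n^{(ν)}(x,u) exp(-α x²) dx = √(π/α) · (Γ(n+ν+1)/n!) · Q_n^{(ν)}(u, 1/(4α)), where L_n^{(ν)}(x,y) = Γ(n+ν+1) ∑_{k=0}^{n} (-1)^k x^k y^(n-k) / ((n-k)! k! Γ(k+ν+1)) is the two-variable associated Laguerre polynomial. -/
open Real MeasureTheory Finset Nat

/-- Two-variable associated Laguerre polynomial `L_n^{(ν)}(x,y)`. -/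
noncomputable def Lassoc (ν : ℝ) (n : ℕ) (x y : ℝ) : ℝ :=
  Real.Gamma (n + ν + 1) * ∑ k ∈ Finset.range (n + 1),
    (-1 : ℝ) ^ k * x ^ k * y ^ (n - k) /
      (((n - k)! : ℝ) * (k ! : ℝ) * Real.Gamma (k + ν + 1))

/-- The polynomials `Q_n^{(ν)}(x,y)`. -/
noncomputable def Qpoly (ν : ℝ) (n : ℕ) (x y : ℝ) : ℝ :=
  (n ! : ℝ) * ∑ k ∈ Finset.range (n / 2 + 1),
    x ^ (n - 2 * k) * y ^ k /
      (((n - 2 * k)! : ℝ) * (k ! : ℝ) * Real.Gamma (2 * k + ν + 1))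

/-!
Expanding `L_n^{(ν)}(x,u)` in powers of `x` reduces the integral to the Gaussian moments
`∫ x^k e^{-αx²} dx`. The odd moments vanish by symmetry, and the even ones are
`√(π/α) (2m)! / (m! (4α)^m)` since `Γ(m + 1/2) = √π (2m)! / (4^m m!)`. The factor `(2m)!` cancels
the `k!` of the term `k = 2m` of `L_n`, which leaves the `m`-th term of `Q_n^{(ν)}(u, 1/(4α))`.
-/

theorem Function.Odd.integral_eq_zero {G E : Type*} [AddGroup G] [MeasurableSpace G]
    [MeasurableNeg G] [NormedAddCommGroup E] [NormedSpace ℝ E] {f : G → E} (hf : f.Odd)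
    (μ : Measure G) [μ.IsNegInvariant] : ∫ x, f x ∂μ = 0 := by
  have h := integral_neg_eq_self f μ
  simp only [hf _, integral_neg] at h
  have h2 : (2 : ℝ) • ∫ x, f x ∂μ = 0 := by
    rw [two_smul]
    nth_rw 1 [← h]
    exact neg_add_cancel _
  exact (smul_eq_zero.mp h2).resolve_left two_ne_zero

theorem Nat.two_pow_mul_factorial_mul_doubleFactorial (m : ℕ) :
    2 ^ m * m ! * (2 * m - 1)‼ = (2 * m)! := by
  cases m with
  | zero => rfl
  | succ m =>
    rw [← doubleFactorial_two_mul, show 2 * (m + 1) = 2 * m + 1 + 1 by ring,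
      factorial_eq_mul_doubleFactorial]
    rfl

theorem Finset.sum_range_succ_eq_sum_even_of_odd_eq_zero {M : Type*} [AddCommMonoid M]
    {f : ℕ → M} (hf : ∀ m, f (2 * m + 1) = 0) (n : ℕ) :
    ∑ k ∈ range (n + 1), f k = ∑ m ∈ range (n / 2 + 1), f (2 * m) := by
  rw [← sum_image (g := (2 * ·)) fun a _ b _ h => by simpa using h]
  refine (sum_subset (fun k hk => ?_) fun k hkn hk => ?_).symm
  · simp only [mem_image, mem_range] at hk ⊢
    omega
  · obtain ⟨m, rfl | rfl⟩ := Nat.even_or_odd' k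
    · rw [mem_range] at hkn
      exact absurd (mem_image.mpr ⟨m, mem_range.mpr (by omega), rfl⟩) hk
    · exact hf m

theorem integral_pow_mul_exp_neg_mul_sq_of_odd (b : ℝ) {k : ℕ} (hk : Odd k) :
    ∫ x : ℝ, x ^ k * exp (-b * x ^ 2) = 0 :=
  Function.Odd.integral_eq_zero (fun x => by simp [hk.neg_pow]) volume

theorem integral_two_mul_pow_mul_exp_neg_mul_sq {b : ℝ} (hb : 0 < b) (m : ℕ) :
    ∫ x : ℝ, x ^ (2 * m) * exp (-b * x ^ 2) = √(π / b) * (2 * m)! / (m ! * (4 * b) ^ m) := by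
  have hGamma : Gamma (m + 1 / 2) = √π * (2 * m)! / (4 ^ m * m !) := by
    rw [Gamma_nat_add_half, ← two_pow_mul_factorial_mul_doubleFactorial,
      show (4 : ℝ) ^ m = 2 ^ m * 2 ^ m by rw [← mul_pow]; norm_num]
    push_cast
    field_simp
  have hq : (((2 * m : ℕ) : ℝ) + 1) / 2 = m + 1 / 2 := by push_cast; ring
  calc ∫ x : ℝ, x ^ (2 * m) * exp (-b * x ^ 2)
      = ∫ x : ℝ, |x| ^ (2 * m) * exp (-b * |x| ^ 2) := by simp [pow_mul]
    _ = 2 * ∫ x in Set.Ioi 0, x ^ ((2 * m : ℕ) : ℝ) * exp (-b * x ^ (2 : ℝ)) := by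
        simp_rw [integral_comp_abs (f := fun x => x ^ (2 * m) * exp (-b * x ^ 2)), rpow_natCast,
          rpow_two]
    _ = 2 * (b ^ (-(m + 1 / 2) : ℝ) * (1 / 2) * Gamma (m + 1 / 2)) := by
        rw [integral_rpow_mul_exp_neg_mul_rpow two_pos
          (neg_one_lt_zero.trans_le (Nat.cast_nonneg _)) hb, neg_div, hq]
    _ = √(π / b) * (2 * m)! / (m ! * (4 * b) ^ m) := by
        rw [hGamma, neg_add, rpow_add hb, rpow_neg hb.le, rpow_neg hb.le, rpow_natCast,
          ← sqrt_eq_rpow, sqrt_div pi_pos.le, mul_pow]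
        have : √b ≠ 0 := (sqrt_pos.mpr hb).ne'
        field_simp

theorem integral_sum_pow_mul_exp_neg_mul_sq {b : ℝ} (hb : 0 < b) (c : ℕ → ℝ) (n : ℕ) :
    ∫ x : ℝ, (∑ k ∈ range (n + 1), c k * x ^ k) * exp (-b * x ^ 2) =
      √(π / b) * ∑ m ∈ range (n / 2 + 1), c (2 * m) * (2 * m)! / (m ! * (4 * b) ^ m) := by
  have hint (k : ℕ) : Integrable fun x : ℝ => c k * (x ^ k * exp (-b * x ^ 2)) := by
    refine Integrable.const_mul ?_ (c k)
    simpa using integrable_rpow_mul_exp_neg_mul_sq hb (neg_one_lt_zero.trans_le k.cast_nonneg)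
  simp_rw [sum_mul, mul_assoc]
  rw [integral_finsetSum _ fun k _ => hint k]
  simp_rw [integral_const_mul]
  rw [sum_range_succ_eq_sum_even_of_odd_eq_zero
      (fun m => by rw [integral_pow_mul_exp_neg_mul_sq_of_odd b (odd_two_mul_add_one m), mul_zero]),
    mul_sum]
  refine sum_congr rfl fun m _ => ?_
  rw [integral_two_mul_pow_mul_exp_neg_mul_sq hb]
  ring

theorem Lassoc_eq_sum_mul_pow (ν : ℝ) (n : ℕ) (x y : ℝ) :
    Lassoc ν n x y = ∑ k ∈ range (n + 1), Gamma (n + ν + 1) * (-1) ^ k * y ^ (n - k) /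
      ((n - k)! * k ! * Gamma (k + ν + 1)) * x ^ k := by
  rw [Lassoc, mul_sum]
  refine sum_congr rfl fun k _ => ?_
  ring

theorem assoc_laguerre_gaussian_integral_general (n : ℕ) (ν : ℝ) (u α : ℝ)
    (hα : 0 < α) :
    ∫ x : ℝ, Lassoc ν n x u * Real.exp (-α * x ^ 2) =
      Real.sqrt (π / α) * (Real.Gamma (n + ν + 1) / (n ! : ℝ)) *
        Qpoly ν n u (1 / (4 * α)) := by
  simp_rw [Lassoc_eq_sum_mul_pow]
  rw [integral_sum_pow_mul_exp_neg_mul_sq hα, Qpoly]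
  simp only [mul_sum]
  refine sum_congr rfl fun m _ => ?_
  have h2m : (((2 * m : ℕ) : ℝ)) = 2 * m := by push_cast; ring
  rw [h2m, (even_two_mul m).neg_one_pow, one_div_pow]
  field_simp

theorem assoc_laguerre_gaussian_integral (n : ℕ) (ν : ℝ) (hν : 0 ≤ ν) (u α : ℝ)
    (hα : 0 < α) :
    ∫ x : ℝ, Lassoc ν n x u * Real.exp (-α * x ^ 2) =
      Real.sqrt (π / α) * (Real.Gamma (n + ν + 1) / (n ! : ℝ)) *
        Qpoly ν n u (1 / (4 * α)) :=
  assoc_laguerre_gaussian_integral_general n ν u α hα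
end

section
/- For every nonnegative integer n, reals ν ≥ 0, u, a, and α > 0: ∫_{-∞}^{∞} L_n^{(ν)}(x + a, u) exp(-α x²) dx = √(π/α) · (Γ(n+ν+1)/n!) · ∑_{k=0}^{n} C(n,k) (-a)^k Q_{n-k}^{(k+ν)}(u, 1/(4α)). -/
open Real MeasureTheory Finset Nat

lemma Real.Gamma_nat_add_half_eq_factorial (m : ℕ) :
    Gamma (m + 1 / 2) = √π * (2 * m)! / (4 ^ m * m !) := by
  rw [Real.Gamma_nat_add_half]
  cases m with
  | zero => simp
  | succ m =>
    rw [show 2 * (m + 1) = 2 * m + 1 + 1 by ring, factorial_eq_mul_doubleFactorial,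
      show 2 * m + 1 + 1 = 2 * (m + 1) by ring, doubleFactorial_two_mul,
      show 2 * (m + 1) - 1 = 2 * m + 1 by omega, show (4 : ℝ) = 2 ^ 2 by norm_num, ← pow_mul]
    push_cast
    field_simp
    ring

lemma sum_range_succ_eq_sum_range_half_of_odd_eq_zero {M : Type*} [AddCommMonoid M] (f : ℕ → M)
    (hodd : ∀ m, f (2 * m + 1) = 0) (k : ℕ) :
    ∑ j ∈ range (k + 1), f j = ∑ m ∈ range (k / 2 + 1), f (2 * m) := by
  rw [← sum_image (g := (2 * ·)) (mul_right_injective₀ two_ne_zero).injOn]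
  refine (sum_subset (fun j => by simp only [mem_image, mem_range]; omega)
    fun j hj hj' => ?_).symm
  obtain ⟨m, rfl⟩ : Odd j := Nat.not_even_iff_odd.mp fun ⟨m, hm⟩ =>
    hj' (mem_image.mpr ⟨m, by simp only [mem_range] at hj ⊢; omega, by omega⟩)
  exact hodd m

lemma sum_range_sum_range_half_comm {M : Type*} [AddCommMonoid M] (n : ℕ)
    (F : ℕ → ℕ → M) :
    ∑ k ∈ range (n + 1), ∑ m ∈ range (k / 2 + 1), F k m
      = ∑ i ∈ range (n + 1), ∑ m ∈ range ((n - i) / 2 + 1), F (i + 2 * m) m := by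
  rw [sum_sigma', sum_sigma']
  refine sum_nbij' (fun p => ⟨p.1 - 2 * p.2, p.2⟩) (fun p => ⟨p.1 + 2 * p.2, p.2⟩)
    ?_ ?_ ?_ ?_ ?_ <;> rintro ⟨k, m⟩ h <;> simp only [mem_sigma, mem_range] at h ⊢
  · omega
  · omega
  · rw [Nat.sub_add_cancel (by omega)]
  · rw [Nat.add_sub_cancel]
  · rw [Nat.sub_add_cancel (by omega)]

section GaussianMoments

variable {b : ℝ}

lemma integrable_pow_mul_exp_neg_mul_sq (hb : 0 < b) (j : ℕ) :
    Integrable fun x : ℝ => x ^ j * exp (-b * x ^ 2) := by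
  simpa using
    integrable_rpow_mul_exp_neg_mul_sq hb (s := j) (by linarith [j.cast_nonneg (α := ℝ)])

lemma integral_pow_odd_mul_exp_neg_mul_sq (m : ℕ) :
    ∫ x : ℝ, x ^ (2 * m + 1) * exp (-b * x ^ 2) = 0 := by
  have h := integral_neg_eq_self (fun x : ℝ => x ^ (2 * m + 1) * exp (-b * x ^ 2)) volume
  simp only [Odd.neg_pow ⟨m, rfl⟩, neg_sq, neg_mul, integral_neg] at h ⊢
  linarith

lemma integral_pow_even_mul_exp_neg_mul_sq (hb : 0 < b) (m : ℕ) :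
    ∫ x : ℝ, x ^ (2 * m) * exp (-b * x ^ 2) =
      √(π / b) * (2 * m)! / (m ! * (4 * b) ^ m) := by
  have hIoi := integral_rpow_mul_exp_neg_mul_rpow (p := 2) (q := 2 * m) two_pos
    (by linarith [m.cast_nonneg (α := ℝ)]) hb
  rw [show ((2 * m : ℝ) + 1) / 2 = m + 1 / 2 by ring,
    Real.Gamma_nat_add_half_eq_factorial] at hIoi
  simp only [show (2 * m : ℝ) = (2 * m : ℕ) by push_cast; ring, rpow_natCast, rpow_two] at hIoi
  calc ∫ x : ℝ, x ^ (2 * m) * exp (-b * x ^ 2)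
      = ∫ x : ℝ, |x| ^ (2 * m) * exp (-b * |x| ^ 2) := by simp [pow_mul]
    _ = _ := by
      rw [integral_comp_abs (f := fun x => x ^ (2 * m) * exp (-b * x ^ 2)), hIoi]
      have hpow : b ^ (-((2 * m : ℕ) + 1 : ℝ) / 2) = (b ^ m * √b)⁻¹ := by
        rw [neg_div, rpow_neg hb.le,
          show ((2 * m : ℕ) + 1 : ℝ) / 2 = m + 1 / 2 by push_cast; ring,
          rpow_add hb, rpow_natCast, ← sqrt_eq_rpow]
      rw [hpow, sqrt_div pi_pos.le, mul_pow]
      field_simp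

lemma integrable_add_pow_mul_exp_neg_mul_sq (hb : 0 < b) (a : ℝ) (k : ℕ) :
    Integrable fun x : ℝ => (x + a) ^ k * exp (-b * x ^ 2) := by
  simp_rw [add_pow, sum_mul]
  refine integrable_finsetSum _ fun j _ => ?_
  simpa only [mul_right_comm _ (exp _), mul_assoc] using
    (integrable_pow_mul_exp_neg_mul_sq hb j).mul_const (a ^ (k - j) * k.choose j)

lemma integral_add_pow_mul_exp_neg_mul_sq (hb : 0 < b) (a : ℝ) (k : ℕ) :
    ∫ x : ℝ, (x + a) ^ k * exp (-b * x ^ 2) =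
      √(π / b) * k ! *
        ∑ m ∈ range (k / 2 + 1), a ^ (k - 2 * m) / ((k - 2 * m)! * m ! * (4 * b) ^ m) := by
  have hexpand (x : ℝ) : (x + a) ^ k * exp (-b * x ^ 2) =
      ∑ j ∈ range (k + 1), a ^ (k - j) * k.choose j * (x ^ j * exp (-b * x ^ 2)) := by
    rw [add_pow, sum_mul]; exact sum_congr rfl fun j _ => by ring
  simp_rw [hexpand]
  rw [integral_finsetSum _ fun j _ => (integrable_pow_mul_exp_neg_mul_sq hb j).const_mul _]
  simp_rw [integral_const_mul]
  rw [sum_range_succ_eq_sum_range_half_of_odd_eq_zero _ fun m => by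
    rw [integral_pow_odd_mul_exp_neg_mul_sq, mul_zero], mul_sum]
  refine sum_congr rfl fun m hm => ?_
  have h2m : 2 * m ≤ k := by simp only [mem_range] at hm; omega
  rw [integral_pow_even_mul_exp_neg_mul_sq hb, Nat.cast_choose ℝ h2m]
  field_simp

end GaussianMoments

theorem assoc_laguerre_shifted_gaussian_integral_general (n : ℕ) (ν : ℝ)
    (u a α : ℝ) (hα : 0 < α) :
    ∫ x : ℝ, Lassoc ν n (x + a) u * Real.exp (-α * x ^ 2) =
      Real.sqrt (π / α) * (Real.Gamma (n + ν + 1) / (n ! : ℝ)) *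
        ∑ k ∈ Finset.range (n + 1),
          (n.choose k : ℝ) * (-a) ^ k * Qpoly (k + ν) (n - k) u (1 / (4 * α)) := by
  have hL (x : ℝ) : Lassoc ν n (x + a) u * exp (-α * x ^ 2) = ∑ k ∈ range (n + 1),
      Gamma (n + ν + 1) * (-1) ^ k * u ^ (n - k) / ((n - k)! * k ! * Gamma (k + ν + 1)) *
        ((x + a) ^ k * exp (-α * x ^ 2)) := by
    rw [Lassoc, mul_sum, sum_mul]; exact sum_congr rfl fun k _ => by ring
  simp_rw [hL]
  rw [integral_finsetSum _ fun k _ => (integrable_add_pow_mul_exp_neg_mul_sq hα a k).const_mul _]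
  simp_rw [integral_const_mul, integral_add_pow_mul_exp_neg_mul_sq hα, mul_sum]
  rw [sum_range_sum_range_half_comm]
  refine sum_congr rfl fun i hi => ?_
  simp only [Qpoly, mul_sum]
  refine sum_congr rfl fun m _ => ?_
  have hin : i ≤ n := by simp only [mem_range] at hi; omega
  -- the left side's term `k = i + 2m`: its `k!` cancels, and `C(n,i) (n-i)! / n! = 1 / i!`
  rw [Nat.add_sub_cancel, show n - (i + 2 * m) = n - i - 2 * m by omega,
    show ((i + 2 * m : ℕ) : ℝ) + ν + 1 = 2 * m + (i + ν) + 1 by push_cast; ring,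
    pow_add, pow_mul, neg_one_sq, one_pow, mul_one, neg_pow a, one_div, inv_pow,
    Nat.cast_choose ℝ hin]
  field_simp

theorem assoc_laguerre_shifted_gaussian_integral (n : ℕ) (ν : ℝ) (hν : 0 ≤ ν)
    (u a α : ℝ) (hα : 0 < α) :
    ∫ x : ℝ, Lassoc ν n (x + a) u * Real.exp (-α * x ^ 2) =
      Real.sqrt (π / α) * (Real.Gamma (n + ν + 1) / (n ! : ℝ)) *
        ∑ k ∈ Finset.range (n + 1),
          (n.choose k : ℝ) * (-a) ^ k * Qpoly (k + ν) (n - k) u (1 / (4 * α)) :=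
  assoc_laguerre_shifted_gaussian_integral_general n ν u a α hα
end
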